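/- Let T ⊂ {(r,z) ∈ ℝ² : r ≥ 0} be a triangle with edges E₁, E₂, E₃ and unit normals n_{E_a}, and let ψ_{E_a} be the local basis functions (modified Raviart–Thomas functions ψ^R for edges with exactly one endpoint on the axis {r = 0}, standard ψ^{RT0} otherwise), each normalized so that ∫_{E_a} ψ_{E_a} · n_{E_a} ds = 1. For a C¹ vector field w on a neighborhood of the closure of T, define the local interpolant I_T w := Σ_{a=1}^{3} ( ∫_{E_a} w · n_{E_a} ds ) ψ_{E_a}. Then the interpolant preserves the mean divergence: ∫_T div( I_T w ) dr dz = ∫_T div w dr dz. In particular, if ∫_T div w dr dz = 0, then ∫_T div( I_T w ) dr dz = 0. -/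

import Mathlib

/-!
By the divergence theorem, `∫_T div v` is, up to the orientation sign of `T`, the sum of the
fluxes of `v` through the three edges. Every `ψ_{E_a}` is affine and has no flux through the two
other edges: one of its two barycentric factors vanishes on such an edge, and the curl of that
factor is tangent to it. On a fixed edge `E`, `∫_E v · n_E ds` is a fixed multiple of the flux of
`v` through `E`, so the normalization of `ψ_{E_b}` makes the flux of `I_T w` through `E_b` equal
to that of `w`. The divergence theorem on `T` is pulled back from the reference triangle through
the affine chart of `T` and the contravariant Piola transform.
-/

open MeasureTheory
open scoped Classical

noncomputable section

/-- Partial derivatives of scalar functions on `ℝ²`. -/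
def pdr (f : ℝ × ℝ → ℝ) (p : ℝ × ℝ) : ℝ := fderiv ℝ f p (1, 0)
def pdz (f : ℝ × ℝ → ℝ) (p : ℝ × ℝ) : ℝ := fderiv ℝ f p (0, 1)

/-- The divergence of a planar vector field. -/
def div2 (F : ℝ × ℝ → ℝ × ℝ) (p : ℝ × ℝ) : ℝ :=
  pdr (fun s => (F s).1) p + pdz (fun s => (F s).2) p

/-- The two-dimensional `curl` of a scalar function: `curl f = (∂_z f, −∂_r f)`. -/
def curl2 (f : ℝ × ℝ → ℝ) (p : ℝ × ℝ) : ℝ × ℝ :=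
  (fderiv ℝ f p (0, 1), -(fderiv ℝ f p (1, 0)))

/-- The Euclidean dot product on `ℝ²`. -/
def dot2 (a b : ℝ × ℝ) : ℝ := a.1 * b.1 + a.2 * b.2

/-- The arclength integral `∫_{[A,B]} f ds` over the segment from `A` to `B`. -/
def lineIntegral (f : ℝ × ℝ → ℝ) (A B : ℝ × ℝ) : ℝ :=
  Real.sqrt (dot2 (B - A) (B - A)) * ∫ t in (0:ℝ)..1, f (A + t • (B - A))

/-- The local basis function of the edge `E = [N_a, N_b]`: the modified Raviart–Thomas
function `ψ_E^R` if exactly one endpoint of `E` lies on the axis `{r = 0}`, the standard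
`ψ_E^{RT0}` otherwise. -/
def psiE (la lb : (ℝ × ℝ) →ᵃ[ℝ] ℝ) (Na Nb : ℝ × ℝ) : ℝ × ℝ → ℝ × ℝ :=
  if Na.1 = 0 ∧ Nb.1 ≠ 0 then fun p => (2 * lb p) • curl2 (fun q => la q) p
  else if Nb.1 = 0 ∧ Na.1 ≠ 0 then fun p => (2 * la p) • curl2 (fun q => lb q) p
  else fun p => (lb p) • curl2 (fun q => la q) p - (la p) • curl2 (fun q => lb q) p

open Set

def det2 (p q : ℝ × ℝ) : ℝ := p.1 * q.2 - p.2 * q.1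

theorem det2_smul_add_smul (a b : ℝ) (x y t : ℝ × ℝ) :
    det2 (a • x + b • y) t = a * det2 x t + b * det2 y t := by
  simp only [det2, Prod.fst_add, Prod.snd_add, Prod.smul_fst, Prod.smul_snd, smul_eq_mul]
  ring

/-- The flux of `v` through `[A, B]` across the normal obtained by turning `B - A` clockwise;
that normal has length `|B - A|`, which accounts for the arclength element. -/
def edgeFlux (v : ℝ × ℝ → ℝ × ℝ) (A B : ℝ × ℝ) : ℝ :=
  ∫ t in (0 : ℝ)..1, det2 (v (A + t • (B - A))) (B - A)

theorem LinearMap.apply_eq_fst_smul_add_snd_smul {R M : Type*} [CommSemiring R]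
    [AddCommMonoid M] [Module R M] (f : R × R →ₗ[R] M) (q : R × R) :
    f q = q.1 • f (1, 0) + q.2 • f (0, 1) := by
  rw [← map_smul, ← map_smul, ← map_add]
  simp

theorem AffineMap.apply_add_smul_sub {k V₁ V₂ : Type*} [Ring k] [AddCommGroup V₁] [Module k V₁]
    [AddCommGroup V₂] [Module k V₂] (f : V₁ →ᵃ[k] V₂) (A B : V₁) (t : k) :
    f (A + t • (B - A)) = f A + t • (f B - f A) := by
  have h := f.apply_lineMap A B t
  rwa [AffineMap.lineMap_apply_module', AffineMap.lineMap_apply_module', add_comm,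
    add_comm _ (f A)] at h

theorem det2_ne_zero_of_biorthogonal (f g : ℝ × ℝ →ₗ[ℝ] ℝ) {u v : ℝ × ℝ} (hfu : f u = 1)
    (hfv : f v = 0) (hgu : g u = 0) (hgv : g v = 1) : det2 u v ≠ 0 := by
  have key : (f (1, 0) * g (0, 1) - f (0, 1) * g (1, 0)) * det2 u v
      = f u * g v - f v * g u := by
    rw [f.apply_eq_fst_smul_add_snd_smul u, f.apply_eq_fst_smul_add_snd_smul v,
      g.apply_eq_fst_smul_add_snd_smul u, g.apply_eq_fst_smul_add_snd_smul v]
    simp only [det2, smul_eq_mul]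
    ring
  intro h
  rw [h, hfu, hfv, hgu, hgv] at key
  norm_num at key

section AffineCalculus

variable {𝕜 E F : Type*} [NontriviallyNormedField 𝕜] [CompleteSpace 𝕜]
  [NormedAddCommGroup E] [NormedSpace 𝕜 E] [FiniteDimensional 𝕜 E]
  [NormedAddCommGroup F] [NormedSpace 𝕜 F]

theorem AffineMap.hasFDerivAt (f : E →ᵃ[𝕜] F) (x : E) :
    HasFDerivAt f (LinearMap.toContinuousLinearMap f.linear) x := by
  rw [f.decomp]
  exact (LinearMap.toContinuousLinearMap f.linear).hasFDerivAt.add_const (f 0)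

theorem AffineMap.contDiff (f : E →ᵃ[𝕜] F) {n : WithTop ℕ∞} : ContDiff 𝕜 n f := by
  rw [f.decomp]
  exact (LinearMap.toContinuousLinearMap f.linear).contDiff.add contDiff_const

end AffineCalculus

theorem curl2_affineMap (f : (ℝ × ℝ) →ᵃ[ℝ] ℝ) (p : ℝ × ℝ) :
    curl2 (fun q => f q) p = (f.linear (0, 1), -f.linear (1, 0)) := by
  simp [curl2, (f.hasFDerivAt p).fderiv]

theorem det2_curl2_affineMap (f : (ℝ × ℝ) →ᵃ[ℝ] ℝ) (p t : ℝ × ℝ) :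
    det2 (curl2 (fun q => f q) p) t = f.linear t := by
  rw [curl2_affineMap, f.linear.apply_eq_fst_smul_add_snd_smul t]
  simp only [det2, smul_eq_mul]
  ring

theorem psiE_eq (la lb : (ℝ × ℝ) →ᵃ[ℝ] ℝ) (Na Nb : ℝ × ℝ) :
    ∃ α β : ℝ, psiE la lb Na Nb = fun p =>
      (α * lb p) • curl2 (fun q => la q) p + (β * la p) • curl2 (fun q => lb q) p := by
  unfold psiE
  split_ifs
  · exact ⟨2, 0, by simp⟩
  · exact ⟨0, 2, by simp⟩
  · exact ⟨1, -1, by simp [sub_eq_add_neg]⟩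

theorem contDiff_psiE (la lb : (ℝ × ℝ) →ᵃ[ℝ] ℝ) (Na Nb : ℝ × ℝ) {n : WithTop ℕ∞} :
    ContDiff ℝ n (psiE la lb Na Nb) := by
  obtain ⟨α, β, hψ⟩ := psiE_eq la lb Na Nb
  simp only [hψ, curl2_affineMap]
  exact ((contDiff_const.mul lb.contDiff).smul contDiff_const).add
    ((contDiff_const.mul la.contDiff).smul contDiff_const)

theorem edgeFlux_psiE_eq_zero (la lb : (ℝ × ℝ) →ᵃ[ℝ] ℝ) (Na Nb : ℝ × ℝ) {A B : ℝ × ℝ}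
    (h : (la A = 0 ∧ la B = 0) ∨ (lb A = 0 ∧ lb B = 0)) :
    edgeFlux (psiE la lb Na Nb) A B = 0 := by
  obtain ⟨α, β, hψ⟩ := psiE_eq la lb Na Nb
  have hlin : ∀ f : (ℝ × ℝ) →ᵃ[ℝ] ℝ, f.linear (B - A) = f B - f A :=
    fun f => f.linearMap_vsub B A
  have hzero : ∀ t : ℝ, det2 (psiE la lb Na Nb (A + t • (B - A))) (B - A) = 0 := by
    intro t
    rw [hψ, det2_smul_add_smul, det2_curl2_affineMap, det2_curl2_affineMap, hlin, hlin,
      la.apply_add_smul_sub, lb.apply_add_smul_sub]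
    rcases h with ⟨hA, hB⟩ | ⟨hA, hB⟩ <;> simp [hA, hB]
  simp [edgeFlux, hzero]

theorem edgeFlux_sum {ι : Type*} (s : Finset ι) (c : ι → ℝ) {F : ι → ℝ × ℝ → ℝ × ℝ}
    (hF : ∀ i ∈ s, Continuous (F i)) (A B : ℝ × ℝ) :
    edgeFlux (fun p => ∑ i ∈ s, c i • F i p) A B = ∑ i ∈ s, c i * edgeFlux (F i) A B := by
  have hdet : ∀ t : ℝ, det2 (∑ i ∈ s, c i • F i (A + t • (B - A))) (B - A)
      = ∑ i ∈ s, c i * det2 (F i (A + t • (B - A))) (B - A) := by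
    intro t
    simp only [det2, Prod.fst_sum, Prod.snd_sum, Prod.smul_fst, Prod.smul_snd, smul_eq_mul,
      Finset.sum_mul, ← Finset.sum_sub_distrib, mul_sub, mul_assoc]
  simp only [edgeFlux, hdet, ← intervalIntegral.integral_const_mul]
  refine intervalIntegral.integral_finsetSum fun i hi => ?_
  have hFi := hF i hi
  exact Continuous.intervalIntegrable (by unfold det2; fun_prop) 0 1

-- In the plane, `n ⊥ t` forces `|t|² (x · n) = det(n, t) det(x, t)`; for `t = 0` both sides
-- below vanish.
theorem sqrt_mul_dot2_of_dot2_eq_zero {n t : ℝ × ℝ} (h : dot2 n t = 0) (x : ℝ × ℝ) :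
    √(dot2 t t) * dot2 x n = √(dot2 t t) * (det2 n t / dot2 t t) * det2 x t := by
  by_cases hq : dot2 t t = 0
  · simp [hq]
  · field_simp
    simp only [dot2, det2] at h ⊢
    linear_combination √(t.1 * t.1 + t.2 * t.2) * (x.1 * t.1 + x.2 * t.2) * h

theorem exists_lineIntegral_dot2_eq_mul_edgeFlux {n A B : ℝ × ℝ} (h : dot2 n (B - A) = 0) :
    ∃ σ : ℝ, ∀ v : ℝ × ℝ → ℝ × ℝ,
      lineIntegral (fun p => dot2 (v p) n) A B = σ * edgeFlux v A B :=
  ⟨√(dot2 (B - A) (B - A)) * (det2 n (B - A) / dot2 (B - A) (B - A)), fun v => by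
    simp only [lineIntegral, edgeFlux, ← intervalIntegral.integral_const_mul,
      sqrt_mul_dot2_of_dot2_eq_zero h]⟩

theorem lineIntegral_dot2_mul_edgeFlux {n A B : ℝ × ℝ} (h : dot2 n (B - A) = 0)
    {ψ : ℝ × ℝ → ℝ × ℝ} (hψ : lineIntegral (fun p => dot2 (ψ p) n) A B = 1)
    (w : ℝ × ℝ → ℝ × ℝ) :
    lineIntegral (fun p => dot2 (w p) n) A B * edgeFlux ψ A B = edgeFlux w A B := by
  obtain ⟨σ, hσ⟩ := exists_lineIntegral_dot2_eq_mul_edgeFlux h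
  rw [hσ] at hψ ⊢
  linear_combination edgeFlux w A B * hψ

section Barycentric

variable {N : Fin 3 → ℝ × ℝ} {l : Fin 3 → (ℝ × ℝ) →ᵃ[ℝ] ℝ}

theorem det2_ne_zero_of_barycentric (hl : ∀ a b : Fin 3, l a (N b) = if a = b then 1 else 0) :
    det2 (N 1 - N 0) (N 2 - N 0) ≠ 0 := by
  have hlin : ∀ a b : Fin 3, (l a).linear (N b - N 0) = l a (N b) - l a (N 0) :=
    fun a b => (l a).linearMap_vsub (N b) (N 0)
  exact det2_ne_zero_of_biorthogonal (l 1).linear (l 2).linear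
    (by simp [hlin, hl]) (by simp [hlin, hl]) (by simp [hlin, hl]) (by simp [hlin, hl])

theorem edgeFlux_psiE_of_ne (hl : ∀ a b : Fin 3, l a (N b) = if a = b then 1 else 0)
    {a b : Fin 3} (hab : a ≠ b) :
    edgeFlux (psiE (l (a + 1)) (l (a + 2)) (N (a + 1)) (N (a + 2))) (N (b + 1)) (N (b + 2))
      = 0 := by
  have hvanish : l b (N (b + 1)) = 0 ∧ l b (N (b + 2)) = 0 := by
    have hb : b ≠ b + 1 ∧ b ≠ b + 2 := by fin_cases b <;> decide
    simp [hl, hb]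
  apply edgeFlux_psiE_eq_zero
  have hba : b = a + 1 ∨ b = a + 2 := by fin_cases a <;> fin_cases b <;> simp_all
  rcases hba with rfl | rfl
  exacts [Or.inl hvanish, Or.inr hvanish]

end Barycentric

def refTriangle : Set (ℝ × ℝ) := {p | 0 ≤ p.1 ∧ 0 ≤ p.2 ∧ p.1 + p.2 ≤ 1}

def refVertex : Fin 3 → ℝ × ℝ := ![(0, 0), (1, 0), (0, 1)]

theorem convexHull_refVertex : convexHull ℝ (range refVertex) = refTriangle := by
  apply le_antisymm
  · refine convexHull_min ?_ ?_
    · rintro _ ⟨i, rfl⟩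
      fin_cases i <;> norm_num [refVertex, refTriangle]
    · intro x ⟨hx1, hx2, hx3⟩ y ⟨hy1, hy2, hy3⟩ a b ha hb hab
      refine ⟨?_, ?_, ?_⟩ <;> simp only [Prod.fst_add, Prod.snd_add, Prod.smul_fst,
        Prod.smul_snd, smul_eq_mul] <;> nlinarith
  · rintro p ⟨h1, h2, h3⟩
    have hp : p = ∑ i, ![1 - p.1 - p.2, p.1, p.2] i • refVertex i := by
      ext <;> simp [Fin.sum_univ_three, refVertex]
    rw [hp]
    refine (convex_convexHull ℝ _).sum_mem (fun i _ => ?_) ?_ fun i _ =>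
      subset_convexHull ℝ _ (mem_range_self i)
    · fin_cases i <;> simp <;> linarith
    · simp [Fin.sum_univ_three]
      ring

theorem isCompact_refTriangle : IsCompact refTriangle := by
  rw [← convexHull_refVertex]
  exact (finite_range _).isCompact_convexHull (𝕜 := ℝ)

theorem measurableSet_refTriangle : MeasurableSet refTriangle :=
  isCompact_refTriangle.isClosed.measurableSet

theorem preimage_swap_refTriangle : Prod.swap ⁻¹' refTriangle = refTriangle := by
  ext
  simp [refTriangle, add_comm, and_left_comm]

theorem setIntegral_refTriangle_comp_swap (g : ℝ × ℝ → ℝ) :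
    ∫ p in refTriangle, g p.swap = ∫ p in refTriangle, g p := by
  conv_lhs => rw [← preimage_swap_refTriangle]
  rw [Measure.volume_eq_prod]
  exact Measure.measurePreserving_swap.setIntegral_preimage_emb
    MeasurableEquiv.prodComm.measurableEmbedding g refTriangle

theorem setIntegral_refTriangle {g : ℝ × ℝ → ℝ} (hg : IntegrableOn g refTriangle) :
    ∫ p in refTriangle, g p = ∫ y in (0 : ℝ)..1, ∫ x in (0 : ℝ)..(1 - y), g (x, y) := by
  have hslice : ∀ y, ∫ x, refTriangle.indicator g (x, y)
      = (Icc 0 1).indicator (fun y => ∫ x in (0 : ℝ)..(1 - y), g (x, y)) y := by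
    intro y
    by_cases hy : y ∈ Icc (0 : ℝ) 1
    · have hsection : (fun x => refTriangle.indicator g (x, y))
          = (Icc 0 (1 - y)).indicator fun x => g (x, y) := by
        ext x
        simp only [indicator, refTriangle, mem_Icc]
        congr 1
        exact propext ⟨fun h => ⟨h.1, by linarith [h.2.2]⟩,
          fun h => ⟨h.1, hy.1, by linarith [h.2]⟩⟩
      rw [hsection, integral_indicator measurableSet_Icc, integral_Icc_eq_integral_Ioc,
        ← intervalIntegral.integral_of_le (by linarith [hy.2]), indicator_of_mem hy]
    · have hzero : ∀ x, refTriangle.indicator g (x, y) = 0 := fun x =>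
        indicator_of_notMem (fun h => hy ⟨h.2.1, by linarith [h.1, h.2.2]⟩) g
      simp [hzero, indicator_of_notMem hy]
  rw [← integral_indicator measurableSet_refTriangle, Measure.volume_eq_prod,
    integral_prod_symm _ (by rwa [← Measure.volume_eq_prod,
      integrable_indicator_iff measurableSet_refTriangle])]
  simp only [hslice]
  rw [integral_indicator measurableSet_Icc, integral_Icc_eq_integral_Ioc,
    ← intervalIntegral.integral_of_le zero_le_one]

theorem ContDiffOn.continuousOn_fderiv_apply {𝕜 E F : Type*} [NontriviallyNormedField 𝕜]
    [NormedAddCommGroup E] [NormedSpace 𝕜 E] [NormedAddCommGroup F] [NormedSpace 𝕜 F]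
    {f : E → F} {U : Set E} (hf : ContDiffOn 𝕜 1 f U) (hU : IsOpen U) (d : E) :
    ContinuousOn (fun p => fderiv 𝕜 f p d) U :=
  (ContinuousLinearMap.apply 𝕜 F d).continuous.comp_continuousOn
    (hf.continuousOn_fderiv_of_isOpen hU le_rfl)

theorem hasDerivAt_pdr {f : ℝ × ℝ → ℝ} {x y : ℝ} (hf : DifferentiableAt ℝ f (x, y)) :
    HasDerivAt (fun x => f (x, y)) (pdr f (x, y)) x :=
  hf.hasFDerivAt.comp_hasDerivAt x ((hasDerivAt_id x).prodMk (hasDerivAt_const x y))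

theorem pdz_eq_pdr_comp_swap (f : ℝ × ℝ → ℝ) (p : ℝ × ℝ) :
    pdz f p = pdr (f ∘ Prod.swap) p.swap := by
  rw [pdr, show f ∘ Prod.swap = f ∘ ContinuousLinearEquiv.prodComm ℝ ℝ ℝ from rfl,
    ContinuousLinearEquiv.comp_right_fderiv]
  rfl

section ReferenceTriangle

variable {U : Set (ℝ × ℝ)}

theorem setIntegral_refTriangle_pdr (hU : IsOpen U) (hTU : refTriangle ⊆ U) {f : ℝ × ℝ → ℝ}
    (hf : ContDiffOn ℝ 1 f U) :
    ∫ p in refTriangle, pdr f p = ∫ y in (0 : ℝ)..1, (f (1 - y, y) - f (0, y)) := by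
  have hcont : ContinuousOn (pdr f) U := hf.continuousOn_fderiv_apply hU (1, 0)
  rw [setIntegral_refTriangle ((hcont.mono hTU).integrableOn_compact isCompact_refTriangle)]
  refine intervalIntegral.integral_congr fun y hy => ?_
  rw [uIcc_of_le zero_le_one] at hy
  have hmem : MapsTo (fun x => (x, y)) (uIcc 0 (1 - y)) U := fun x hx => by
    rw [uIcc_of_le (by linarith [hy.2])] at hx
    exact hTU ⟨hx.1, hy.1, by linarith [hx.2]⟩
  exact intervalIntegral.integral_eq_sub_of_hasDerivAt
    (fun x hx => hasDerivAt_pdr ((hf.differentiableOn one_ne_zero).differentiableAt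
      (hU.mem_nhds (hmem hx))))
    (hcont.comp (by fun_prop : Continuous fun x : ℝ => (x, y)).continuousOn hmem).intervalIntegrable

theorem setIntegral_refTriangle_pdz (hU : IsOpen U) (hTU : refTriangle ⊆ U) {f : ℝ × ℝ → ℝ}
    (hf : ContDiffOn ℝ 1 f U) :
    ∫ p in refTriangle, pdz f p = ∫ x in (0 : ℝ)..1, (f (x, 1 - x) - f (x, 0)) := by
  have hTU' : refTriangle ⊆ Prod.swap ⁻¹' U := by
    rw [← preimage_swap_refTriangle]
    exact preimage_mono hTU
  simp only [pdz_eq_pdr_comp_swap]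
  rw [setIntegral_refTriangle_comp_swap (pdr (f ∘ Prod.swap)),
    setIntegral_refTriangle_pdr (hU.preimage continuous_swap) hTU'
      (hf.comp (f := Prod.swap) (contDiff_snd.prodMk contDiff_fst).contDiffOn
        (mapsTo_preimage _ _))]
  rfl

theorem setIntegral_refTriangle_div2 (hU : IsOpen U) (hTU : refTriangle ⊆ U)
    {v : ℝ × ℝ → ℝ × ℝ} (hv : ContDiffOn ℝ 1 v U) :
    ∫ p in refTriangle, div2 v p
      = ∑ i : Fin 3, edgeFlux v (refVertex (i + 1)) (refVertex (i + 2)) := by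
  have hv₁ : ContDiffOn ℝ 1 (fun p => (v p).1) U := contDiff_fst.comp_contDiffOn hv
  have hv₂ : ContDiffOn ℝ 1 (fun p => (v p).2) U := contDiff_snd.comp_contDiffOn hv
  have hdiv : ∫ p in refTriangle, div2 v p = (∫ p in refTriangle, pdr (fun s => (v s).1) p)
      + ∫ p in refTriangle, pdz (fun s => (v s).2) p :=
    integral_add
      (((hv₁.continuousOn_fderiv_apply hU _).mono hTU).integrableOn_compact isCompact_refTriangle)
      (((hv₂.continuousOn_fderiv_apply hU _).mono hTU).integrableOn_compact isCompact_refTriangle)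
  rw [hdiv, setIntegral_refTriangle_pdr hU hTU hv₁, setIntegral_refTriangle_pdz hU hTU hv₂]
  have hpath : ∀ (γ : ℝ → ℝ × ℝ) (φ : ℝ × ℝ → ℝ), Continuous γ → Continuous φ →
      (∀ t ∈ Icc (0 : ℝ) 1, γ t ∈ refTriangle) →
      IntervalIntegrable (fun t => φ (v (γ t))) volume 0 1 := fun γ φ hγ hφ hmaps =>
    (hφ.comp_continuousOn (hv.continuousOn.comp hγ.continuousOn fun t ht =>
      hTU (hmaps t (by rwa [uIcc_of_le zero_le_one] at ht)))).intervalIntegrable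
  have hflip : ∀ g : ℝ → ℝ, ∫ t in (0 : ℝ)..1, g (1 - t) = ∫ t in (0 : ℝ)..1, g t := fun g => by
    simp [intervalIntegral.integral_comp_sub_left]
  have hhypotenuse := hflip fun x => (v (x, 1 - x)).2
  simp only [sub_sub_cancel] at hhypotenuse
  simp only [edgeFlux, det2, refVertex, Fin.isValue, Prod.snd_sub, Prod.fst_sub,
    Fin.sum_univ_three, zero_add, Matrix.cons_val_one, Matrix.cons_val_zero, Matrix.cons_val,
    Prod.mk_sub_mk, zero_sub, sub_zero, Prod.smul_mk, smul_eq_mul, mul_neg, mul_one,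
    Prod.mk_add_mk, ← sub_eq_add_neg, sub_neg_eq_add, Fin.reduceAdd, sub_self, mul_zero, add_zero,
    intervalIntegral.integral_neg]
  rw [intervalIntegral.integral_sub, intervalIntegral.integral_sub, intervalIntegral.integral_add,
    hflip fun y => (v (0, y)).1, hhypotenuse]
  · ring
  all_goals refine hpath _ _ (by fun_prop) (by fun_prop) fun t ⟨h₀, h₁⟩ => ⟨?_, ?_, ?_⟩
  all_goals dsimp only; linarith

end ReferenceTriangle

def colMap (u w : ℝ × ℝ) : (ℝ × ℝ) →L[ℝ] ℝ × ℝ :=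
  (ContinuousLinearMap.fst ℝ ℝ ℝ).smulRight u + (ContinuousLinearMap.snd ℝ ℝ ℝ).smulRight w

@[simp] theorem colMap_apply (u w x : ℝ × ℝ) : colMap u w x = x.1 • u + x.2 • w := by
  simp [colMap]

theorem det_colMap (u w : ℝ × ℝ) : (colMap u w).det = det2 u w := by
  have hmat : LinearMap.toMatrix (Module.Basis.finTwoProd ℝ) (Module.Basis.finTwoProd ℝ)
      (colMap u w : (ℝ × ℝ) →ₗ[ℝ] ℝ × ℝ) = !![u.1, w.1; u.2, w.2] := by
    ext i j
    fin_cases i <;> fin_cases j <;> simp [LinearMap.toMatrix_apply]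
  rw [ContinuousLinearMap.det, ← LinearMap.det_toMatrix (Module.Basis.finTwoProd ℝ), hmat,
    Matrix.det_fin_two_of, det2]
  ring

theorem colMap_injective {u w : ℝ × ℝ} (h : det2 u w ≠ 0) : Function.Injective (colMap u w) := by
  rw [← det_colMap] at h
  exact (Module.End.isUnit_iff _).mp
    ((LinearMap.isUnit_iff_isUnit_det _).mpr (isUnit_iff_ne_zero.mpr h)) |>.injective

def adjColMap (u w : ℝ × ℝ) : (ℝ × ℝ) →L[ℝ] ℝ × ℝ :=
  (ContinuousLinearMap.fst ℝ ℝ ℝ).smulRight (w.2, -u.2)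
    + (ContinuousLinearMap.snd ℝ ℝ ℝ).smulRight (-w.1, u.1)

theorem det2_adjColMap (u w y q : ℝ × ℝ) : det2 (adjColMap u w y) q = det2 y (colMap u w q) := by
  simp only [adjColMap, colMap_apply, det2, add_apply,
    ContinuousLinearMap.smulRight_apply, ContinuousLinearMap.coe_fst',
    ContinuousLinearMap.coe_snd', Prod.fst_add, Prod.snd_add, Prod.smul_fst, Prod.smul_snd,
    smul_eq_mul]
  ring

theorem div2_eq_of_hasFDerivAt {F : ℝ × ℝ → ℝ × ℝ} {D : (ℝ × ℝ) →L[ℝ] ℝ × ℝ} {p : ℝ × ℝ}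
    (h : HasFDerivAt F D p) : div2 F p = (D (1, 0)).1 + (D (0, 1)).2 := by
  simp [div2, pdr, pdz, h.fst.fderiv, h.snd.fderiv]

def triangleChart (P : Fin 3 → ℝ × ℝ) : (ℝ × ℝ) →ᵃ[ℝ] ℝ × ℝ where
  toFun x := P 0 + colMap (P 1 - P 0) (P 2 - P 0) x
  linear := colMap (P 1 - P 0) (P 2 - P 0)
  map_vadd' x y := by
    simp only [vadd_eq_add, map_add, ContinuousLinearMap.coe_coe]
    abel

section TriangleChart

variable (P : Fin 3 → ℝ × ℝ)

theorem triangleChart_refVertex (i : Fin 3) : triangleChart P (refVertex i) = P i := by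
  fin_cases i <;> simp [triangleChart, refVertex]

theorem image_triangleChart_refTriangle :
    triangleChart P '' refTriangle = convexHull ℝ (range P) := by
  rw [← convexHull_refVertex, (triangleChart P).image_convexHull, ← range_comp]
  exact congrArg _ (congrArg range (funext (triangleChart_refVertex P)))

theorem hasFDerivAt_triangleChart (x : ℝ × ℝ) :
    HasFDerivAt (triangleChart P) (colMap (P 1 - P 0) (P 2 - P 0)) x :=
  (colMap _ _).hasFDerivAt.const_add (P 0)

/-- The contravariant Piola transform along `triangleChart P`, scaled by its Jacobian
determinant. -/
def piola (v : ℝ × ℝ → ℝ × ℝ) (x : ℝ × ℝ) : ℝ × ℝ :=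
  adjColMap (P 1 - P 0) (P 2 - P 0) (v (triangleChart P x))

variable {P}

theorem div2_piola {v : ℝ × ℝ → ℝ × ℝ} {x : ℝ × ℝ}
    (hv : DifferentiableAt ℝ v (triangleChart P x)) :
    div2 (piola P v) x = det2 (P 1 - P 0) (P 2 - P 0) * div2 v (triangleChart P x) := by
  set D := fderiv ℝ v (triangleChart P x) with hD
  have hpiola : HasFDerivAt (piola P v)
      ((adjColMap (P 1 - P 0) (P 2 - P 0)).comp (D.comp (colMap (P 1 - P 0) (P 2 - P 0)))) x :=
    (adjColMap _ _).hasFDerivAt.comp x (hv.hasFDerivAt.comp x (hasFDerivAt_triangleChart P x))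
  rw [div2_eq_of_hasFDerivAt hv.hasFDerivAt, div2_eq_of_hasFDerivAt hpiola, ← hD]
  simp only [ContinuousLinearMap.comp_apply, colMap_apply, adjColMap,
    add_apply, ContinuousLinearMap.smulRight_apply,
    ContinuousLinearMap.coe_fst', ContinuousLinearMap.coe_snd', one_smul, zero_smul, add_zero,
    zero_add]
  rw [← D.coe_coe, D.toLinearMap.apply_eq_fst_smul_add_snd_smul (P 1 - P 0),
    D.toLinearMap.apply_eq_fst_smul_add_snd_smul (P 2 - P 0)]
  simp only [ContinuousLinearMap.coe_coe, Prod.fst_add, Prod.snd_add, Prod.smul_fst,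
    Prod.smul_snd, smul_eq_mul, det2]
  ring

theorem edgeFlux_piola (v : ℝ × ℝ → ℝ × ℝ) (a b : ℝ × ℝ) :
    edgeFlux (piola P v) a b = edgeFlux v (triangleChart P a) (triangleChart P b) := by
  have hlin : triangleChart P b - triangleChart P a = colMap (P 1 - P 0) (P 2 - P 0) (b - a) :=
    ((triangleChart P).linearMap_vsub b a).symm
  simp only [edgeFlux, piola, det2_adjColMap, (triangleChart P).apply_add_smul_sub, hlin]

end TriangleChart

theorem setIntegral_convexHull_div2 {U : Set (ℝ × ℝ)} {P : Fin 3 → ℝ × ℝ}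
    (hP : det2 (P 1 - P 0) (P 2 - P 0) ≠ 0) (hU : IsOpen U) (hPU : convexHull ℝ (range P) ⊆ U)
    {v : ℝ × ℝ → ℝ × ℝ} (hv : ContDiffOn ℝ 1 v U) :
    ∫ p in convexHull ℝ (range P), div2 v p
      = SignType.sign (det2 (P 1 - P 0) (P 2 - P 0))
          * ∑ i : Fin 3, edgeFlux v (P (i + 1)) (P (i + 2)) := by
  set d := det2 (P 1 - P 0) (P 2 - P 0)
  have hTU : refTriangle ⊆ triangleChart P ⁻¹' U := by
    rw [← image_subset_iff, image_triangleChart_refTriangle]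
    exact hPU
  have hinj : InjOn (triangleChart P) refTriangle :=
    ((add_right_injective (P 0)).comp (colMap_injective hP)).injOn
  have hpiola : ContDiffOn ℝ 1 (piola P v) (triangleChart P ⁻¹' U) :=
    (adjColMap _ _).contDiff.comp_contDiffOn
      (hv.comp (triangleChart P).contDiff.contDiffOn (mapsTo_preimage _ _))
  have hdiv : ∀ x ∈ refTriangle,
      |d| • div2 v (triangleChart P x) = SignType.sign d * div2 (piola P v) x := fun x hx => by
    rw [div2_piola ((hv.differentiableOn one_ne_zero).differentiableAt (hU.mem_nhds (hTU hx))),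
      ← mul_assoc, sign_mul_self, smul_eq_mul]
  rw [← image_triangleChart_refTriangle, integral_image_eq_integral_abs_det_fderiv_smul volume
    measurableSet_refTriangle (fun x _ => (hasFDerivAt_triangleChart P x).hasFDerivWithinAt) hinj,
    det_colMap, setIntegral_congr_fun measurableSet_refTriangle hdiv, integral_const_mul,
    setIntegral_refTriangle_div2 (hU.preimage (triangleChart P).continuous_of_finiteDimensional)
      hTU hpiola]
  simp only [edgeFlux_piola, triangleChart_refVertex]

theorem local_interpolant_preserves_mean_divergence_general
    (N : Fin 3 → ℝ × ℝ)
    (l : Fin 3 → (ℝ × ℝ) →ᵃ[ℝ] ℝ)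
    (hl : ∀ a b : Fin 3, l a (N b) = if a = b then 1 else 0)
    (n : Fin 3 → ℝ × ℝ)
    (hperp : ∀ a, dot2 (n a) (N (a + 2) - N (a + 1)) = 0)
    (hnorm : ∀ a, lineIntegral
        (fun p => dot2 (psiE (l (a + 1)) (l (a + 2)) (N (a + 1)) (N (a + 2)) p) (n a))
        (N (a + 1)) (N (a + 2)) = 1)
    (U : Set (ℝ × ℝ)) (hU : IsOpen U) (hTU : convexHull ℝ (Set.range N) ⊆ U)
    (w : ℝ × ℝ → ℝ × ℝ) (hw : ContDiffOn ℝ 1 w U) :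
    ∫ p in convexHull ℝ (Set.range N),
        div2 (fun s => ∑ a : Fin 3,
          (lineIntegral (fun t => dot2 (w t) (n a)) (N (a + 1)) (N (a + 2))) •
            psiE (l (a + 1)) (l (a + 2)) (N (a + 1)) (N (a + 2)) s) p
      = ∫ p in convexHull ℝ (Set.range N), div2 w p := by
  have hψ (a : Fin 3) : ContDiff ℝ 1 (psiE (l (a + 1)) (l (a + 2)) (N (a + 1)) (N (a + 2))) :=
    contDiff_psiE _ _ _ _
  have hN := det2_ne_zero_of_barycentric hl
  rw [setIntegral_convexHull_div2 hN hU hTU hw, setIntegral_convexHull_div2 hN hU hTU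
    (ContDiff.sum fun a _ => (hψ a).const_smul _).contDiffOn]
  congr 1
  refine Finset.sum_congr rfl fun b _ => ?_
  rw [edgeFlux_sum _ _ (fun a _ => (hψ a).continuous), Finset.sum_eq_single b
    (fun a _ hab => by rw [edgeFlux_psiE_of_ne hl hab, mul_zero]) (by simp)]
  exact lineIntegral_dot2_mul_edgeFlux (hperp b) (hnorm b) w

/-- The local (modified Raviart–Thomas) interpolant
`I_T w = Σ_a (∫_{E_a} w · n_a ds) ψ_{E_a}` preserves the mean divergence:
`∫_T div(I_T w) = ∫_T div w` for every `C¹` field `w` on a neighborhood of the closure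
of `T`. -/
theorem local_interpolant_preserves_mean_divergence
    (N : Fin 3 → ℝ × ℝ) (hind : AffineIndependent ℝ N)
    (l : Fin 3 → (ℝ × ℝ) →ᵃ[ℝ] ℝ)
    (hl : ∀ a b : Fin 3, l a (N b) = if a = b then 1 else 0)
    (hax : ∀ a, 0 ≤ (N a).1)
    (n : Fin 3 → ℝ × ℝ)
    (hperp : ∀ a, dot2 (n a) (N (a + 2) - N (a + 1)) = 0)
    (hunit : ∀ a, dot2 (n a) (n a) = 1)
    (hnorm : ∀ a, lineIntegral
        (fun p => dot2 (psiE (l (a + 1)) (l (a + 2)) (N (a + 1)) (N (a + 2)) p) (n a))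
        (N (a + 1)) (N (a + 2)) = 1)
    (U : Set (ℝ × ℝ)) (hU : IsOpen U) (hTU : convexHull ℝ (Set.range N) ⊆ U)
    (w : ℝ × ℝ → ℝ × ℝ) (hw : ContDiffOn ℝ 1 w U) :
    ∫ p in convexHull ℝ (Set.range N),
        div2 (fun s => ∑ a : Fin 3,
          (lineIntegral (fun t => dot2 (w t) (n a)) (N (a + 1)) (N (a + 2))) •
            psiE (l (a + 1)) (l (a + 2)) (N (a + 1)) (N (a + 2)) s) p
      = ∫ p in convexHull ℝ (Set.range N), div2 w p :=
  local_interpolant_preserves_mean_divergence_general N l hl n hperp hnorm U hU hTU w hw
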